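/- Any infinite word x over a finite alphabet which is not ultimately periodic satisfies Rep(x) ≥ rep(x) + 1/(1 + rep(x) + rep(x)²), where rep(x) = liminf r(n, x)/n and Rep(x) = limsup r(n, x)/n, provided rep(x) is finite. -/

import Mathlib

/-!
Write `r n` for `minReturn x n`. A witness for `r n` is a segment `[a, r n)` of `x` with a
period `p > 0` and `a + p + n = r n`, so `r` is strictly increasing; since `x` is not ultimately
periodic, `r` has infinitely many jumps `r (v + 1) ≥ r v + 2`. At a jump the witnesses for `v`
and `v + 1` cannot overlap by the sum of their periods (Fine–Wilf would extend the first one),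
whence `r (v + 1) ≥ 2 (v + 1)` and `Rep x ≥ 2`; this settles `ρ ≤ 1.81`.

For larger `ρ` suppose `ρ - ε < r n / n < ρ + δ` eventually. Comparing the two witnesses at a
jump `v` produces a factor repetition which forces one of them to have a period of order
`(δ + ε) v`. Two such short-period witnesses at consecutive jumps overlap by more than the sum
of their periods, so by Fine–Wilf they merge into a single periodic segment, and then `r` cannot
jump between them. The inequality needed for the overlap is `(ρ - 1 + δ)² < ρ (ρ - 1) (1 - δ)`,
which holds for `δ = 1 / (1 + ρ + ρ²)` with room to spare.
-/

open Filter

/-- `x` is ultimately periodic. -/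
def UltimatelyPeriodic {A : Type*} (x : ℕ → A) : Prop :=
  ∃ N T : ℕ, 0 < T ∧ ∀ k ≥ N, x (k + T) = x k

/-- The set of lengths `m` of prefixes of `x` whose last `n` letters occur
a second time inside the prefix. -/
def returnSet {A : Type*} (x : ℕ → A) (n : ℕ) : Set ℕ :=
  {m : ℕ | ∃ i : ℕ, i + n < m ∧ ∀ k < n, x (i + k) = x (m - n + k)}

/-- `r(n, x)`: the length of the smallest prefix of `x` containing two
(possibly overlapping) occurrences of some word of length `n`. -/
noncomputable def minReturn {A : Type*} (x : ℕ → A) (n : ℕ) : ℕ :=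
  sInf (returnSet x n)

section

variable {A : Type*}

def HasPeriodOn (x : ℕ → A) (a b p : ℕ) : Prop :=
  ∀ t, a ≤ t → t + p < b → x t = x (t + p)

theorem Nat.forall_of_shift_invariant {P : ℕ → Prop} {a b c p : ℕ} (hp : 0 < p)
    (hstep : ∀ t, a ≤ t → t + p < b → (P t ↔ P (t + p)))
    (hwin : ∀ t, c ≤ t → t < c + p → P t) (hac : a ≤ c) (hcb : c + p ≤ b) :
    ∀ t, a ≤ t → t < b → P t := by
  have above : ∀ t, c ≤ t → t < b → P t := by
    intro t
    induction t using Nat.strong_induction_on with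
    | _ t ih =>
      intro hct htb
      by_cases ht : t < c + p
      · exact hwin t hct ht
      · have h := ih (t - p) (by omega) (by omega) (by omega)
        rwa [hstep (t - p) (by omega) (by omega), Nat.sub_add_cancel (by omega)] at h
  have below : ∀ d t, c ≤ t + d → a ≤ t → t < b → P t := by
    intro d
    induction d with
    | zero => exact fun t hct _ htb => above t hct htb
    | succ d ih =>
      intro t hct hat htb
      by_cases ht : c ≤ t
      · exact above t ht htb
      · exact (hstep t hat (by omega)).2 (ih (t + p) (by omega) (by omega) (by omega))
  exact fun t hat htb => below c t (by omega) hat htb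

namespace HasPeriodOn

variable {x : ℕ → A} {a b c d g p q : ℕ}

theorem mono (h : HasPeriodOn x a b p) (hac : a ≤ c) (hdb : d ≤ b) : HasPeriodOn x c d p :=
  fun t hct htd => h t (hac.trans hct) (htd.trans_le hdb)

theorem mul (h : HasPeriodOn x a b p) (k : ℕ) : HasPeriodOn x a b (k * p) := by
  induction k with
  | zero => intro t _ _; simp
  | succ k ih =>
    intro t hat htb
    rw [Nat.succ_mul] at htb ⊢
    rw [← add_assoc]
    exact (ih t hat (by omega)).trans (h _ (by omega) (by omega))

theorem of_dvd (h : HasPeriodOn x a b g) (hg : g ∣ p) : HasPeriodOn x a b p := by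
  obtain ⟨k, rfl⟩ := hg
  simpa only [mul_comm] using h.mul k

theorem tsub (hq : HasPeriodOn x a b q) (hp : HasPeriodOn x (a + (q - p)) b p) :
    HasPeriodOn x a (b - p) (q - p) := by
  intro t hat htb
  rcases le_total p q with hpq | hqp
  · rw [hq t hat (by omega), hp (t + (q - p)) (by omega) (by omega),
      show t + (q - p) + p = t + q by omega]
  · simp [Nat.sub_eq_zero_of_le hqp]

theorem extend (h : HasPeriodOn x a b p) (hg : HasPeriodOn x c d g) (hac : a ≤ c) (hdb : d ≤ b)
    (hlen : c + p + g ≤ d) (hp : 0 < p) : HasPeriodOn x a b g := by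
  intro t hat htb
  refine Nat.forall_of_shift_invariant (P := fun t => x t = x (t + g)) (b := b - g) (c := c) hp
    (fun s has hsb => ?_) (fun s hcs hsc => hg s hcs (by omega)) hac (by omega) t hat (by omega)
  rw [h s has (by omega), h (s + g) (by omega) (by omega), add_right_comm]

/-- The Fine–Wilf theorem on a segment. -/
theorem gcd (hp : HasPeriodOn x a b p) (hq : HasPeriodOn x a b q) (hp0 : 0 < p) (hq0 : 0 < q)
    (hlen : a + p + q ≤ b) : HasPeriodOn x a b (p.gcd q) := by
  induction hn : p + q using Nat.strong_induction_on generalizing p q b with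
  | _ n ih =>
    wlog hpq : p ≤ q generalizing p q
    · rw [Nat.gcd_comm]
      exact this hq hp hq0 hp0 (by omega) (by omega) (by omega)
    rcases hpq.eq_or_lt with rfl | hpq
    · rwa [Nat.gcd_self]
    have hsub : HasPeriodOn x a (b - p) (q - p) := hq.tsub (hp.mono (by omega) le_rfl)
    have hg := ih (p + (q - p)) (by omega) (hp.mono le_rfl (by omega)) hsub hp0 (by omega)
      (by omega) rfl
    have hgle := Nat.gcd_le_right p (show 0 < q - p by omega)
    rw [Nat.gcd_sub_self_right hpq.le] at hg hgle
    exact hp.extend hg le_rfl (by omega) (by omega) hp0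

theorem union (h : HasPeriodOn x a b p) (h' : HasPeriodOn x c d p) (hcb : c + p ≤ b)
    (had : a + p ≤ d) : HasPeriodOn x (min a c) (max b d) p := by
  intro t ht htp
  by_cases hab : a ≤ t ∧ t + p < b
  · exact h t hab.1 hab.2
  · exact h' t (by omega) (by omega)

theorem gcd_of_overlap (h : HasPeriodOn x a b p) (h' : HasPeriodOn x c d q) (hp : 0 < p)
    (hq : 0 < q) (hov : max a c + p + q ≤ min b d) :
    HasPeriodOn x (min a c) (max b d) (p.gcd q) := by
  have hg := (h.mono (le_max_left a c) (min_le_left b d)).gcd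
    (h'.mono (le_max_right a c) (min_le_right b d)) hp hq hov
  have hgp := Nat.gcd_le_left q hp
  have hgq := Nat.gcd_le_right p hq
  exact (h.extend hg (le_max_left a c) (min_le_left b d) (by omega) hp).union
    (h'.extend hg (le_max_right a c) (min_le_right b d) (by omega) hq) (by omega) (by omega)

theorem apply_sub_eq (h : HasPeriodOn x a b g) (hp : g ∣ p) (hq : g ∣ q) (hp0 : 0 < p)
    (hq0 : 0 < q) (hpb : a + p ≤ b) (hqb : a + q ≤ b) : x (b - p) = x (b - q) := by
  wlog hpq : p ≤ q generalizing p q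
  · exact (this hq hp hq0 hp0 hqb hpb (by omega)).symm
  have := (h.of_dvd (Nat.dvd_sub hq hp)) (b - q) (by omega) (by omega)
  rw [show b - q + (q - p) = b - p by omega] at this
  exact this.symm

end HasPeriodOn

section MinReturn

variable {x : ℕ → A} {a b n p : ℕ}

theorem mem_returnSet_iff {m : ℕ} :
    m ∈ returnSet x n ↔ ∃ a p, 0 < p ∧ a + p + n = m ∧ HasPeriodOn x a m p := by
  constructor
  · rintro ⟨i, hi, hx⟩
    refine ⟨i, m - n - i, by omega, by omega, fun t hit htm => ?_⟩
    have := hx (t - i) (by omega)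
    rwa [show i + (t - i) = t by omega, show m - n + (t - i) = t + (m - n - i) by omega] at this
  · rintro ⟨a, p, hp, rfl, h⟩
    refine ⟨a, by omega, fun k hk => ?_⟩
    rw [h (a + k) (by omega) (by omega)]
    congr 1
    omega

theorem minReturn_le_of_hasPeriodOn (hp : 0 < p) (h : HasPeriodOn x a b p) (hb : a + p + n ≤ b) :
    minReturn x n ≤ a + p + n :=
  Nat.sInf_le (mem_returnSet_iff.2 ⟨a, p, hp, rfl, h.mono le_rfl hb⟩)

variable [Finite A]

theorem returnSet_nonempty (x : ℕ → A) (n : ℕ) : (returnSet x n).Nonempty := by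
  obtain ⟨i, j, hij, heq⟩ :=
    Finite.exists_ne_map_eq_of_infinite fun i : ℕ => fun k : Fin n => x (i + k)
  wlog hlt : i < j generalizing i j
  · exact this j i hij.symm heq.symm (by omega)
  refine ⟨j + n, i, by omega, fun k hk => ?_⟩
  simpa [show j + n - n = j by omega] using congrFun heq ⟨k, hk⟩

theorem exists_hasPeriodOn_minReturn (x : ℕ → A) (n : ℕ) :
    ∃ a p, 0 < p ∧ a + p + n = minReturn x n ∧ HasPeriodOn x a (minReturn x n) p :=
  mem_returnSet_iff.1 (Nat.sInf_mem (returnSet_nonempty x n))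

noncomputable def returnStart (x : ℕ → A) (n : ℕ) : ℕ :=
  (exists_hasPeriodOn_minReturn x n).choose

noncomputable def returnPeriod (x : ℕ → A) (n : ℕ) : ℕ :=
  (exists_hasPeriodOn_minReturn x n).choose_spec.choose

theorem returnPeriod_pos (x : ℕ → A) (n : ℕ) : 0 < returnPeriod x n :=
  (exists_hasPeriodOn_minReturn x n).choose_spec.choose_spec.1

theorem returnStart_add_returnPeriod (x : ℕ → A) (n : ℕ) :
    returnStart x n + returnPeriod x n + n = minReturn x n :=
  (exists_hasPeriodOn_minReturn x n).choose_spec.choose_spec.2.1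

theorem hasPeriodOn_returnPeriod (x : ℕ → A) (n : ℕ) :
    HasPeriodOn x (returnStart x n) (minReturn x n) (returnPeriod x n) :=
  (exists_hasPeriodOn_minReturn x n).choose_spec.choose_spec.2.2

theorem strictMono_minReturn (x : ℕ → A) : StrictMono (minReturn x) := by
  refine strictMono_nat_of_lt_succ fun n => ?_
  have := returnStart_add_returnPeriod x (n + 1)
  have := minReturn_le_of_hasPeriodOn (returnPeriod_pos x (n + 1))
    (hasPeriodOn_returnPeriod x (n + 1)) (n := n) (by omega)
  omega

end MinReturn

def IsJump (x : ℕ → A) (v : ℕ) : Prop :=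
  minReturn x v + 2 ≤ minReturn x (v + 1)

section Jumps

variable [Finite A] {x : ℕ → A} {u u' v v' : ℕ}

theorem minReturn_add_eq_of_forall_not_isJump {a b : ℕ} (hab : a ≤ b)
    (h : ∀ w, a ≤ w → w < b → ¬IsJump x w) : minReturn x b + a = minReturn x a + b := by
  induction b, hab using Nat.le_induction with
  | base => rfl
  | succ b hab ih =>
    have hb := h b hab (by omega)
    have := strictMono_minReturn x (Nat.lt_add_one b)
    have := ih fun w haw hwb => h w haw (by omega)
    unfold IsJump at hb
    omega

/-- Without jumps `returnStart + returnPeriod` is eventually constant, so some start `a` recurs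
infinitely often and its ever longer witnesses make `x` periodic from `a` on. -/
theorem exists_isJump_ge (hx : ¬UltimatelyPeriodic x) (V : ℕ) : ∃ v ≥ V, IsJump x v := by
  by_contra! h
  set s := minReturn x V - V
  have hs : ∀ w ≥ V, returnStart x w + returnPeriod x w = s := fun w hw => by
    have := minReturn_add_eq_of_forall_not_isJump hw fun u hu _ => h u hu
    have := returnStart_add_returnPeriod x w
    have := returnStart_add_returnPeriod x V
    omega
  have hfreq : ∃ᶠ w in atTop, ∃ a ∈ Finset.range (s + 1), V ≤ w ∧ returnStart x w = a :=
    (eventually_ge_atTop V).frequently.mono fun w hw =>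
      ⟨_, Finset.mem_range.2 (by have := hs w hw; omega), hw, rfl⟩
  obtain ⟨a, -, ha⟩ := (frequently_exists_finset _).1 hfreq
  refine hx ⟨a, s - a, ?_, fun k hk => ?_⟩
  · obtain ⟨w, -, hVw, rfl⟩ := frequently_atTop.1 ha 0
    have := hs w hVw
    have := returnPeriod_pos x w
    omega
  · obtain ⟨w, hkw, hVw, rfl⟩ := frequently_atTop.1 ha (k + 1)
    have := hs w hVw
    have := returnStart_add_returnPeriod x w
    rw [show s - returnStart x w = returnPeriod x w by omega]
    exact (hasPeriodOn_returnPeriod x w k hk (by omega)).symm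

theorem exists_next_isJump (hx : ¬UltimatelyPeriodic x) (v : ℕ) :
    ∃ v' > v, IsJump x v' ∧ ∀ w, v < w → w < v' → ¬IsJump x w := by
  classical
  have h : ∃ v', v < v' ∧ IsJump x v' := (exists_isJump_ge hx (v + 1)).imp fun _ h => h
  exact ⟨Nat.find h, (Nat.find_spec h).1, (Nat.find_spec h).2,
    fun w hvw hw hj => Nat.find_min h hw ⟨hvw, hj⟩⟩

namespace IsJump

theorem apply_ne (hv : IsJump x v) : x (returnStart x v + v) ≠ x (minReturn x v) := by
  intro heq
  have e := returnStart_add_returnPeriod x v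
  have hper : HasPeriodOn x (returnStart x v) (minReturn x v + 1) (returnPeriod x v) := by
    intro t ht htp
    rcases (show t + returnPeriod x v < minReturn x v ∨ t = returnStart x v + v by omega)
      with h | rfl
    · exact hasPeriodOn_returnPeriod x v t ht h
    · rwa [show returnStart x v + v + returnPeriod x v = minReturn x v by omega]
  have := minReturn_le_of_hasPeriodOn (returnPeriod_pos x v) hper (n := v + 1) (by omega)
  unfold IsJump at hv
  omega

theorem apply_sub_returnPeriod_succ (hv : IsJump x v)
    (h : returnStart x (v + 1) + returnPeriod x (v + 1) ≤ minReturn x v) :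
    x (minReturn x v - returnPeriod x (v + 1)) = x (minReturn x v) := by
  unfold IsJump at hv
  have := hasPeriodOn_returnPeriod x (v + 1) (minReturn x v - returnPeriod x (v + 1)) (by omega)
    (by omega)
  rwa [Nat.sub_add_cancel (by omega)] at this

/-- Otherwise the witnesses at `v` and `v + 1` overlap by the sum of their periods, and
Fine–Wilf would let the witness at `v` grow by one letter. -/
theorem two_mul_add_two_le (hv : IsJump x v) : 2 * v + 2 ≤ minReturn x (v + 1) := by
  by_contra! h
  have hj : minReturn x v + 2 ≤ minReturn x (v + 1) := hv
  have e := returnStart_add_returnPeriod x v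
  have e' := returnStart_add_returnPeriod x (v + 1)
  have hp := returnPeriod_pos x v
  have hq := returnPeriod_pos x (v + 1)
  set a := returnStart x v
  set p := returnPeriod x v
  set c := returnStart x (v + 1)
  set q := returnPeriod x (v + 1)
  set m := minReturn x v
  have hP : HasPeriodOn x (max a c) m p :=
    (hasPeriodOn_returnPeriod x v).mono (le_max_left a c) le_rfl
  have hQ : HasPeriodOn x (max a c) m q :=
    (hasPeriodOn_returnPeriod x (v + 1)).mono (le_max_right a c) (by omega)
  have key := (hP.gcd hQ hp hq (by omega)).apply_sub_eq (Nat.gcd_dvd_left p q)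
    (Nat.gcd_dvd_right p q) hp hq (by omega) (by omega)
  rw [show m - p = a + v by omega, hv.apply_sub_returnPeriod_succ (by omega)] at key
  exact hv.apply_ne key

/-- Where the two witnesses overlap both periods hold, so their difference is a period of a
factor of length `r v + v + 1 - r (v + 1)`. -/
theorem min_returnPeriod_add_minReturn_le (hv : IsJump x v)
    (h : minReturn x (v + 1) ≤ minReturn x v + v) :
    min (returnPeriod x v) (returnPeriod x (v + 1)) +
      minReturn x (minReturn x v + v + 1 - minReturn x (v + 1)) ≤ minReturn x v := by
  have hj : minReturn x v + 2 ≤ minReturn x (v + 1) := hv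
  have e := returnStart_add_returnPeriod x v
  have e' := returnStart_add_returnPeriod x (v + 1)
  have hP := hasPeriodOn_returnPeriod x v
  have hQ := (hasPeriodOn_returnPeriod x (v + 1)).mono le_rfl (show minReturn x v ≤ _ by omega)
  set a := returnStart x v
  set p := returnPeriod x v
  set c := returnStart x (v + 1)
  set q := returnPeriod x (v + 1)
  set m := minReturn x v
  rcases lt_trichotomy p q with hpq | hpq | hqp
  · have := minReturn_le_of_hasPeriodOn (n := m + v + 1 - minReturn x (v + 1)) (by omega)
      (hQ.tsub (hP.mono (by omega) le_rfl)) (by omega)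
    omega
  · have key : x (m - q) = x m := hv.apply_sub_returnPeriod_succ (by omega)
    rw [← hpq, show m - p = a + v by omega] at key
    exact absurd key hv.apply_ne
  · have hQ' : HasPeriodOn x (c + q - p + (p - q)) m q := by
      rwa [show c + q - p + (p - q) = c by omega]
    have := minReturn_le_of_hasPeriodOn (n := m + v + 1 - minReturn x (v + 1)) (by omega)
      ((hP.mono (by omega) le_rfl).tsub hQ') (by omega)
    omega

theorem minReturn_add_lt (hv : IsJump x v) (hv' : IsJump x v') (hvv' : v < v')
    (hu : u = v ∨ u = v + 1) (hu' : u' = v' ∨ u' = v' + 1) (hgood : u = v ∨ u' = v' + 1) :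
    minReturn x u + u' < minReturn x u' + u := by
  have h₁ := (strictMono_minReturn x).add_le_nat (v' - (v + 1)) (v + 1)
  rw [Nat.sub_add_cancel hvv'] at h₁
  have h₂ := strictMono_minReturn x (Nat.lt_add_one v')
  unfold IsJump at hv hv'
  rcases hu with rfl | rfl <;> rcases hu' with rfl | rfl <;> omega

end IsJump

theorem frequently_two_mul_le_minReturn (hx : ¬UltimatelyPeriodic x) :
    ∃ᶠ n in atTop, 2 * n ≤ minReturn x n :=
  frequently_atTop.2 fun V =>
    let ⟨v, hVv, hv⟩ := exists_isJump_ge hx V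
    ⟨v + 1, by omega, by have := hv.two_mul_add_two_le; omega⟩

/-- Two witnesses with short periods at `u < u'` share, by Fine–Wilf, a common period on their
union; the resulting witness bounds `r` at `u'`. -/
theorem minReturn_add_le_of_short_periods (huu' : u < u') (h₁ : returnPeriod x u' ≤ u)
    (h₂ : minReturn x u' + returnPeriod x u ≤ minReturn x u + u') :
    minReturn x u' + u ≤ minReturn x u + u' := by
  have e := returnStart_add_returnPeriod x u
  have e' := returnStart_add_returnPeriod x u'
  have hπ := returnPeriod_pos x u
  have hπ' := returnPeriod_pos x u'
  have hmono := strictMono_minReturn x huu'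
  have hg := (hasPeriodOn_returnPeriod x u).gcd_of_overlap (hasPeriodOn_returnPeriod x u') hπ hπ'
    (by omega)
  have hg0 := Nat.gcd_pos_of_pos_left (returnPeriod x u') hπ
  have hgπ := Nat.gcd_le_left (returnPeriod x u') hπ
  set n := minReturn x u' - min (returnStart x u) (returnStart x u') -
    (returnPeriod x u).gcd (returnPeriod x u')
  have hn := minReturn_le_of_hasPeriodOn hg0 hg (n := n) (by omega)
  have := (strictMono_minReturn x).le_iff_le.1
    (hn.trans (by omega) : minReturn x n ≤ minReturn x u')
  omega

end Jumps

/-- `ρ` stands for `rep x`, `ρ + δ` for the claimed lower bound on `Rep x`, and `ε` for the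
tolerance allowed below `ρ`; smaller `ρ` are covered by `Rep x ≥ 2`. -/
structure RepParams (ρ δ ε : ℝ) : Prop where
  gap : δ * (1 + ρ + ρ ^ 2) = 1
  large : 1.81 < ρ
  slack : ε = δ ^ 2 / 10

noncomputable def shortBound (ρ δ ε v : ℝ) : ℝ :=
  (ρ - ε) * ((δ + ε) * v + ρ)

namespace RepParams

variable {ρ δ ε : ℝ}

theorem bounds (hP : RepParams ρ δ ε) :
    0 < δ ∧ δ ≤ 1 / 6 ∧ ρ * δ ≤ 0.3 ∧ 0 < ε ∧ ε ≤ δ / 60 ∧ ρ * ε ≤ 0.03 * δ ∧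
      ρ ^ 2 * ε ≤ δ / 10 ∧ δ + 1.228 * ε + 0.228 ≤ 0.228 * ρ ∧ 0 < ρ - 1 - ε := by
  obtain ⟨hδ, hρ, hε⟩ := hP
  have hδpos : 0 < δ := by nlinarith
  have hδ6 : δ ≤ 1 / 6 := by nlinarith
  have hρδ : ρ * δ ≤ 0.3 := by nlinarith [sq_nonneg (ρ - 1.81)]
  have hεpos : 0 < ε := by rw [hε]; positivity
  have hε60 : ε ≤ δ / 60 := by rw [hε]; nlinarith
  have hρε : ρ * ε ≤ 0.03 * δ := by rw [hε]; nlinarith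
  have hρ2ε : ρ ^ 2 * ε ≤ δ / 10 := by
    have hρ2δ : ρ ^ 2 * δ ≤ 1 := by nlinarith
    rw [hε]
    calc ρ ^ 2 * (δ ^ 2 / 10) = ρ ^ 2 * δ * δ / 10 := by ring
      _ ≤ 1 * δ / 10 := by gcongr
      _ = δ / 10 := by ring
  exact ⟨hδpos, hδ6, hρδ, hεpos, hε60, hρε, hρ2ε, by nlinarith, by nlinarith⟩

/-- The identity `(ρ-1)ρ(1-δ) - (ρ-1+δ)² = δ((ρ-1)²(ρ+1) - δ)`, which is where the choice
`δ = 1/(1+ρ+ρ²)` enters, leaves a margin that survives the perturbation by `ε`. -/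
theorem key_margin (hP : RepParams ρ δ ε) :
    1.3 * δ ≤ (ρ - 1 - ε) * (ρ - ε) * (1 - δ - ε) - (ρ - 1 + δ) ^ 2 := by
  obtain ⟨hδpos, hδ6, hρδ, hεpos, hε60, hρε, hρ2ε, -, -⟩ := hP.bounds
  have hρ := hP.large
  have hid : (ρ - 1) * ρ * (1 - δ) - (ρ - 1 + δ) ^ 2 = δ * ((ρ - 1) ^ 2 * (ρ + 1) - δ) := by
    linear_combination (1 - ρ) * hP.gap
  have hD : (ρ - 1) * ρ * (1 - δ) - (ρ - 1 - ε) * (ρ - ε) * (1 - δ - ε) =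
      ε * (2 * ρ - 1) * (1 - δ) - ε ^ 2 * (1 - δ) + ε * ((ρ - 1) * ρ) - ε ^ 2 * (2 * ρ - 1) +
        ε ^ 3 := by ring
  have t1 : ε * (2 * ρ - 1) * (1 - δ) ≤ 2 * (ρ * ε) := by
    nlinarith [mul_nonneg hεpos.le hδpos.le,
      mul_nonneg (mul_nonneg hεpos.le hδpos.le) (by linarith : (0 : ℝ) ≤ 2 * ρ - 1)]
  have t2 : 0 ≤ ε ^ 2 * (1 - δ) := by nlinarith [sq_nonneg ε]
  have t3 : ε * ((ρ - 1) * ρ) ≤ ρ ^ 2 * ε := by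
    nlinarith [mul_nonneg hεpos.le (by linarith : 0 ≤ ρ)]
  have t4 : 0 ≤ ε ^ 2 * (2 * ρ - 1) := by nlinarith [sq_nonneg ε]
  have t5 : ε ^ 3 ≤ ε := by nlinarith [sq_nonneg ε, sq_nonneg (ε - 1)]
  have hcube : 0 ≤ (ρ - 1.81) ^ 2 * (ρ - 1.81) := mul_nonneg (sq_nonneg _) (by linarith)
  have hmarg : 1.67 ≤ (ρ - 1) ^ 2 * (ρ + 1) - δ := by nlinarith [sq_nonneg (ρ - 1.81)]
  have h1 : 1.67 * δ ≤ δ * ((ρ - 1) ^ 2 * (ρ + 1) - δ) := by nlinarith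
  linarith

theorem shortBound_le (hP : RepParams ρ δ ε) {v v' : ℝ} (hv' : 0 ≤ v')
    (hs : (ρ - 1 - ε) * v' < (ρ - 1 + δ) * (v + 1)) (hV : 100 * (1 + ρ + ρ ^ 2) ^ 3 ≤ v) :
    shortBound ρ δ ε v' ≤ v := by
  obtain ⟨hδpos, hδ6, hρδ, hεpos, hε60, hρε, -, hb7, hb8⟩ := hP.bounds
  have hρ := hP.large
  have hρε' : (ρ - ε) * (δ + ε) ≤ 0.31 := by
    nlinarith [mul_nonneg hεpos.le hδpos.le, sq_nonneg ε]
  have hρερ : (ρ - ε) * ρ ≤ ρ ^ 2 := by nlinarith [mul_nonneg hεpos.le (by linarith : 0 ≤ ρ)]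
  have hτ : shortBound ρ δ ε v' ≤ 0.31 * v' + ρ ^ 2 := by
    unfold shortBound
    nlinarith [mul_le_mul_of_nonneg_right hρε' hv']
  have hv'b : v' < 1.228 * (v + 1) := by
    have h7 : (ρ - 1 + δ) * (v + 1) ≤ (ρ - 1 - ε) * (1.228 * (v + 1)) := by
      nlinarith [mul_le_mul_of_nonneg_right (by linarith : ρ - 1 + δ ≤ 1.228 * (ρ - 1 - ε))
        (by nlinarith : (0 : ℝ) ≤ v + 1)]
    exact lt_of_mul_lt_mul_left (hs.trans_le h7) hb8.le
  have hq6 : (6.08 : ℝ) ≤ 1 + ρ + ρ ^ 2 := by nlinarith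
  have hcube : 3000 * (1 + ρ + ρ ^ 2) ≤ 100 * (1 + ρ + ρ ^ 2) ^ 3 := by
    nlinarith [sq_nonneg (1 + ρ + ρ ^ 2)]
  nlinarith

set_option maxHeartbeats 400000 in
theorem add_shortBound_le (hP : RepParams ρ δ ε) {v v' u' : ℝ} (hv : 0 ≤ v)
    (hs : (ρ - 1 - ε) * v' < (ρ - 1 + δ) * (v + 1)) (hu' : u' ≤ v' + 1)
    (hV : 100 * (1 + ρ + ρ ^ 2) ^ 3 ≤ v) :
    (ρ + δ) * u' + shortBound ρ δ ε v + 1 ≤ (ρ - ε) * v + u' := by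
  obtain ⟨hδpos, hδ6, hρδ, hεpos, hε60, hρε, hρ2ε, hb7, hb8⟩ := hP.bounds
  have hρ := hP.large
  have hρ0 : (0 : ℝ) ≤ ρ := by linarith
  have hδv : 100 * (1 + ρ + ρ ^ 2) ^ 2 ≤ δ * v := by
    have h := mul_le_mul_of_nonneg_left hV hδpos.le
    rwa [show δ * (100 * (1 + ρ + ρ ^ 2) ^ 3) = 100 * (1 + ρ + ρ ^ 2) ^ 2 by
      linear_combination 100 * (1 + ρ + ρ ^ 2) ^ 2 * hP.gap] at h
  have hnn : 0 ≤ ρ - 1 + δ := by linarith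
  have hc1 : (ρ - 1 + δ) ^ 2 ≤ ρ ^ 2 := by
    nlinarith [mul_nonneg (by linarith : (0 : ℝ) ≤ 1 - δ) (by linarith : (0 : ℝ) ≤ 2 * ρ - 1 + δ)]
  have hkeyv := mul_le_mul_of_nonneg_right hP.key_margin hv
  have f1 : (ρ - 1 - ε) * ((ρ - 1 + δ) * v') ≤ (ρ - 1 + δ) ^ 2 * (v + 1) := by
    nlinarith [mul_le_mul_of_nonneg_left hs.le hnn]
  have c2 : (ρ - 1 - ε) * (ρ - 1 + δ) ≤ ρ ^ 2 := by
    rw [sq]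
    exact mul_le_mul (by linarith) (by linarith) hnn hρ0
  have c3 : (ρ - 1 - ε) * ((ρ - ε) * ρ) ≤ ρ ^ 3 := by
    nlinarith [mul_nonneg hεpos.le hρ0, mul_nonneg (mul_nonneg hεpos.le hρ0) hρ0,
      mul_nonneg hεpos.le (mul_nonneg hεpos.le hρ0), sq_nonneg ρ]
  have f3 : (ρ - 1 + δ) ^ 2 + (ρ - 1 - ε) * (ρ - 1 + δ) + (ρ - 1 - ε) * ((ρ - ε) * ρ) +
      (ρ - 1 - ε) ≤ 3 * (1 + ρ + ρ ^ 2) ^ 2 := by nlinarith [sq_nonneg ρ]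
  have hQ1 : (1 : ℝ) ≤ (1 + ρ + ρ ^ 2) ^ 2 := by nlinarith
  have hS : (ρ - 1 - ε) * ((ρ - 1 + δ) * (v' + 1) + shortBound ρ δ ε v + 1) ≤
      (ρ - 1 - ε) * ((ρ - ε) * v) := by
    unfold shortBound
    linarith
  have hG := le_of_mul_le_mul_left hS hb8
  nlinarith [mul_le_mul_of_nonneg_left hu' hnn]

theorem lt_shortBound (hP : RepParams ρ δ ε) {v m R w s μ : ℝ} (hw : w + R = m + v + 1)
    (hm : (ρ - ε) * v < m) (hR : R < (ρ + δ) * (v + 1)) (hs : (ρ - ε) * w < s)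
    (hμ : μ + s ≤ m) : μ < shortBound ρ δ ε v := by
  obtain ⟨-, hδ6, -, hεpos, -, -, -, -, hb8⟩ := hP.bounds
  have hρε : 0 < ρ - ε := by linarith
  have t1 := mul_lt_mul_of_pos_left hR hρε
  have t2 := mul_lt_mul_of_pos_left hm hb8
  have t3 : (ρ - ε) * (δ - 1) < 0 := mul_neg_of_pos_of_neg hρε (by linarith)
  unfold shortBound
  nlinarith

theorem add_le_of_large (hP : RepParams ρ δ ε) {N v m R : ℝ} (hN : 2 * N ≤ v)
    (hV : 100 * (1 + ρ + ρ ^ 2) ^ 3 ≤ v) (hm : (ρ - ε) * v < m) (hR : R < (ρ + δ) * (v + 1)) :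
    N + R ≤ m + v := by
  obtain ⟨hδpos, hδ6, hρδ, hεpos, hε60, -, -, -, -⟩ := hP.bounds
  have hρ := hP.large
  have hq6 : (6.08 : ℝ) ≤ 1 + ρ + ρ ^ 2 := by nlinarith
  have hQ : 36 * (1 + ρ + ρ ^ 2) ≤ (1 + ρ + ρ ^ 2) ^ 3 := by
    nlinarith [sq_nonneg (1 + ρ + ρ ^ 2)]
  nlinarith

end RepParams

theorem lt_of_two_lt_add_one_div {ρ : ℝ} (h : 2 < ρ + 1 / (1 + ρ + ρ ^ 2)) : 1.81 < ρ := by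
  by_contra! hle
  have hQ : 0 < 1 + ρ + ρ ^ 2 := by nlinarith [sq_nonneg (ρ + 1 / 2)]
  rw [← sub_lt_iff_lt_add', lt_div_iff₀ hQ] at h
  nlinarith [sq_nonneg (ρ + 1 / 2), sq_nonneg ρ,
    mul_nonneg (by linarith : (0 : ℝ) ≤ 1.81 - ρ) (sq_nonneg ρ)]

theorem eventually_lt_mul_of_limsup_lt {f : ℕ → ℕ} {c : ℝ}
    (h : limsup (fun n : ℕ => (((f n : ℝ) / n : ℝ) : EReal)) atTop < (c : EReal)) :
    ∀ᶠ n in atTop, (f n : ℝ) < c * n := by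
  filter_upwards [eventually_lt_of_limsup_lt h, eventually_gt_atTop 0] with n hn hn0
  rw [← div_lt_iff₀ (by exact_mod_cast hn0)]
  exact_mod_cast hn

theorem eventually_mul_lt_of_lt_liminf {f : ℕ → ℕ} {c : ℝ}
    (h : (c : EReal) < liminf (fun n : ℕ => (((f n : ℝ) / n : ℝ) : EReal)) atTop) :
    ∀ᶠ n in atTop, c * n < f n := by
  filter_upwards [eventually_lt_of_lt_liminf h, eventually_gt_atTop 0] with n hn hn0
  rw [← lt_div_iff₀ (by exact_mod_cast hn0)]
  exact_mod_cast hn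

namespace RepParams

variable [Finite A] {x : ℕ → A} {ρ δ ε : ℝ} {N : ℕ}

theorem exists_short_at_isJump (hP : RepParams ρ δ ε)
    (hb : ∀ n ≥ N, (ρ - ε) * n < minReturn x n ∧ (minReturn x n : ℝ) < (ρ + δ) * n) {v : ℕ}
    (hv : IsJump x v) (hvN : 2 * N ≤ v) (hV : 100 * (1 + ρ + ρ ^ 2) ^ 3 ≤ (v : ℝ)) :
    ∃ u, (u = v ∨ u = v + 1) ∧ (returnPeriod x u : ℝ) < shortBound ρ δ ε v := by
  have hm := (hb v (by omega)).1
  have hR : (minReturn x (v + 1) : ℝ) < (ρ + δ) * (v + 1) := by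
    exact_mod_cast (hb (v + 1) (by omega)).2
  have hle : N + minReturn x (v + 1) ≤ minReturn x v + v := by
    exact_mod_cast hP.add_le_of_large (N := N) (by exact_mod_cast hvN) hV hm hR
  set w := minReturn x v + v + 1 - minReturn x (v + 1)
  have hw : (w : ℝ) + minReturn x (v + 1) = minReturn x v + v + 1 := by
    exact_mod_cast (show w + minReturn x (v + 1) = minReturn x v + v + 1 by omega)
  have key : ((min (returnPeriod x v) (returnPeriod x (v + 1)) : ℕ) : ℝ) + minReturn x w ≤
      minReturn x v := by
    exact_mod_cast hv.min_returnPeriod_add_minReturn_le (by omega)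
  have hμ := hP.lt_shortBound hw hm hR (hb w (by omega)).1 key
  rcases min_choice (returnPeriod x v) (returnPeriod x (v + 1)) with h | h <;> rw [h] at hμ
  exacts [⟨v, Or.inl rfl, hμ⟩, ⟨v + 1, Or.inr rfl, hμ⟩]

theorem false_of_short_periods (hP : RepParams ρ δ ε)
    (hb : ∀ n ≥ N, (ρ - ε) * n < minReturn x n ∧ (minReturn x n : ℝ) < (ρ + δ) * n)
    {v v' u u' : ℕ} (hv : IsJump x v) (hv' : IsJump x v') (hvv' : v < v')
    (hgap : ∀ w, v < w → w < v' → ¬IsJump x w) (hu : u = v ∨ u = v + 1)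
    (hu' : u' = v' ∨ u' = v' + 1) (hgood : u = v ∨ u' = v' + 1)
    (hπ : (returnPeriod x u : ℝ) < shortBound ρ δ ε v)
    (hπ' : (returnPeriod x u' : ℝ) < shortBound ρ δ ε v')
    (hvN : N ≤ v) (hV : 100 * (1 + ρ + ρ ^ 2) ^ 3 ≤ (v : ℝ)) : False := by
  have hvu : (v : ℝ) ≤ u := by exact_mod_cast (show v ≤ u by omega)
  have hu'v' : (u' : ℝ) ≤ v' + 1 := by exact_mod_cast (show u' ≤ v' + 1 by omega)
  have hs : (ρ - 1 - ε) * v' < (ρ - 1 + δ) * (v + 1) := by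
    have hadj : (minReturn x v' : ℝ) + (v + 1) = minReturn x (v + 1) + v' := by
      exact_mod_cast minReturn_add_eq_of_forall_not_isJump hvv' hgap
    have h₁ := (hb v' (by omega)).1
    have h₂ : (minReturn x (v + 1) : ℝ) < (ρ + δ) * (v + 1) := by
      exact_mod_cast (hb (v + 1) (by omega)).2
    linarith
  have h₁ : returnPeriod x u' ≤ u := by
    have := hP.shortBound_le (Nat.cast_nonneg v') hs hV
    exact Nat.lt_succ_iff.1 (by exact_mod_cast (show (returnPeriod x u' : ℝ) < u + 1 by linarith))
  have h₂ : minReturn x u' + returnPeriod x u ≤ minReturn x u + u' := by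
    have := hP.add_shortBound_le (Nat.cast_nonneg v) hs hu'v' hV
    have hlow : (ρ - ε) * v < minReturn x u := by
      have := (strictMono_minReturn x).monotone (show v ≤ u by omega)
      have : (minReturn x v : ℝ) ≤ minReturn x u := by exact_mod_cast this
      linarith [(hb v hvN).1]
    have hup := (hb u' (by omega)).2
    exact_mod_cast (show (minReturn x u' : ℝ) + returnPeriod x u ≤ minReturn x u + u' by linarith)
  have := minReturn_add_le_of_short_periods (by omega) h₁ h₂
  have := hv.minReturn_add_lt hv' hvv' hu hu' hgood
  omega

/-- At every large jump `v` the witness at `v` or at `v + 1` has a short period, and two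
consecutive jumps cannot both carry one unless the first sits at `v + 1` and the second at `v'`;
three consecutive jumps therefore give a contradiction. -/
theorem false_of_eventually_bounds (hP : RepParams ρ δ ε) (hx : ¬UltimatelyPeriodic x)
    (hb : ∀ᶠ n in atTop, (ρ - ε) * n < minReturn x n ∧ (minReturn x n : ℝ) < (ρ + δ) * n) :
    False := by
  obtain ⟨N, hN⟩ := eventually_atTop.1 hb
  obtain ⟨V, hV⟩ := eventually_atTop.1 <| (eventually_ge_atTop (2 * N)).and <|
    tendsto_natCast_atTop_atTop.eventually_ge_atTop (100 * (1 + ρ + ρ ^ 2) ^ 3)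
  obtain ⟨v₁, hv₁, j₁⟩ := exists_isJump_ge hx V
  obtain ⟨v₂, h₁₂, j₂, g₁₂⟩ := exists_next_isJump hx v₁
  obtain ⟨v₃, h₂₃, j₃, g₂₃⟩ := exists_next_isJump hx v₂
  obtain ⟨hN₁, hV₁⟩ := hV v₁ hv₁
  obtain ⟨hN₂, hV₂⟩ := hV v₂ (by omega)
  obtain ⟨hN₃, hV₃⟩ := hV v₃ (by omega)
  obtain ⟨u₁, hu₁, s₁⟩ := hP.exists_short_at_isJump hN j₁ hN₁ hV₁
  obtain ⟨u₂, hu₂, s₂⟩ := hP.exists_short_at_isJump hN j₂ hN₂ hV₂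
  obtain ⟨u₃, hu₃, s₃⟩ := hP.exists_short_at_isJump hN j₃ hN₃ hV₃
  by_cases h : u₁ = v₁ ∨ u₂ = v₂ + 1
  · exact hP.false_of_short_periods hN j₁ j₂ h₁₂ g₁₂ hu₁ hu₂ h s₁ s₂ (by omega) hV₁
  · exact hP.false_of_short_periods hN j₂ j₃ h₂₃ g₂₃ hu₂ hu₃ (by omega) s₂ s₃ (by omega) hV₂

end RepParams

end

theorem stmt7 {A : Type*} [Fintype A] (x : ℕ → A)
    (hx : ¬ UltimatelyPeriodic x) (ρ : ℝ)
    (hrep : liminf (fun n : ℕ => (((minReturn x n : ℝ) / n : ℝ) : EReal)) atTop = (ρ : EReal)) :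
    ((ρ + 1 / (1 + ρ + ρ ^ 2) : ℝ) : EReal) ≤
      limsup (fun n : ℕ => (((minReturn x n : ℝ) / n : ℝ) : EReal)) atTop := by
  by_contra! hlt
  set δ := 1 / (1 + ρ + ρ ^ 2) with hδ
  have hup := eventually_lt_mul_of_limsup_lt hlt
  have hρ : 1.81 < ρ := by
    obtain ⟨n, hn, h2n⟩ := (hup.and_frequently (frequently_two_mul_le_minReturn hx)).exists
    have : (2 : ℝ) * n ≤ minReturn x n := by exact_mod_cast h2n
    exact lt_of_two_lt_add_one_div (lt_of_mul_lt_mul_right (by linarith) (Nat.cast_nonneg n))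
  have hP : RepParams ρ δ (δ ^ 2 / 10) := ⟨by rw [hδ]; field_simp, hρ, rfl⟩
  obtain ⟨-, -, -, hε, -⟩ := hP.bounds
  have hlow := eventually_mul_lt_of_lt_liminf (f := minReturn x) (c := ρ - δ ^ 2 / 10)
    (by rw [hrep]; exact_mod_cast (show ρ - δ ^ 2 / 10 < ρ by linarith))
  exact hP.false_of_eventually_bounds hx (hlow.and hup)
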